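/- Let B be a finite set of players, H a nonempty set of strategies, N : B → Finset B a symmetric neighborhood structure with l ∈ N(l) for all l, and component functions c_l : (B → H) → ℝ each local to N(l). Define F(h) = Σ_{l ∈ B} c_l(h) and U_j(h) = Σ_{l ∈ N(j)} c_l(h). Then each player's unilateral optimization of its local utility coincides with unilateral optimization of the global function: for every player j and all profiles h, h' differing only at j, U_j(h) ≥ U_j(h') if and only if F(h) ≥ F(h'). In particular, a unilateral best response of player j with respect to U_j is also a unilateral best response with respect to F. -/
import Mathlib


/-- Unilateral optimization of the local utility `U_j` coincides with
unilateral optimization of the global function `F`. -/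
theorem local_opt_iff_global_opt
    {B H : Type*} [Fintype B] [DecidableEq B] [Nonempty H]
    (N : B → Finset B)
    (hsym : ∀ j l : B, j ∈ N l ↔ l ∈ N j)
    (hself : ∀ l : B, l ∈ N l)
    (c : B → (B → H) → ℝ)
    (hloc : ∀ (l : B) (h h' : B → H), (∀ k ∈ N l, h k = h' k) → c l h = c l h')
    (F : (B → H) → ℝ) (hF : ∀ h, F h = ∑ l, c l h)
    (U : B → (B → H) → ℝ) (hU : ∀ j h, U j h = ∑ l ∈ N j, c l h)
    (j : B) (h h' : B → H)
    (hdev : ∀ k : B, k ≠ j → h k = h' k) :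
    U j h ≥ U j h' ↔ F h ≥ F h' := by
  have hsplit : ∀ g : B → H, ∑ l, c l g = ∑ l ∈ N j, c l g + ∑ l ∈ (N j)ᶜ, c l g := by
    intro g
    rw [Finset.sum_add_sum_compl]
  have hcomp : ∀ l ∈ (N j)ᶜ, c l h = c l h' := by
    intro l hl
    rw [Finset.mem_compl] at hl
    exact hloc l h h' fun k hk => hdev k fun hkj => hl ((hsym j l).mp (hkj ▸ hk))
  have hkey : F h - F h' = U j h - U j h' := by
    rw [hF, hF, hU, hU, hsplit, hsplit, Finset.sum_congr rfl hcomp]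
    ring
  constructor <;> intro hge <;> linarith
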